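/- The quartic/linear interpolation kernel S²_{4/1} with parameters a₀₁ ≥ -1 (a₀₁ ≠ -1 assumed for the rational form) and a₀₂ satisfies the partition of unity property: for every real t, Σ_{i ∈ ℤ} S²_{4/1}(t - i) = 1. -/

import Mathlib

noncomputable def S41b (a1 a2 t : ℝ) : ℝ :=
  if |t| < 1 then
    (1 - |t|) ^ 2 * (1 + (2 + a1) * |t| + (3 + 2 * a1 + a2) * |t| ^ 2) / (1 + a1 * |t|)
  else if |t| < 2 then
    (2 - |t|) ^ 2 * (1 - |t|) ^ 2 * (3 + a2) / (-1 + a1 - a1 * |t|)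
  else 0

lemma S41b_zero (a1 a2 x : ℝ) (hx : 2 ≤ |x|) : S41b a1 a2 x = 0 := by
  unfold S41b
  rw [if_neg (by linarith), if_neg (by linarith)]

lemma S41b_cell_sum (a1 a2 : ℝ) (ha1 : -1 < a1) (u : ℝ) (h0 : 0 ≤ u) (h1 : u < 1) :
    S41b a1 a2 (u+1) + S41b a1 a2 u + S41b a1 a2 (u-1) + S41b a1 a2 (u-2) = 1 := by
  rcases eq_or_lt_of_le h0 with h0' | h0'
  · rw [← h0']
    unfold S41b
    norm_num
  · have b1 : |u+1| = u + 1 := abs_of_nonneg (by linarith)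
    have b2 : |u| = u := abs_of_nonneg h0
    have b3 : |u-1| = 1 - u := by rw [abs_of_nonpos (by linarith)]; ring
    have b4 : |u-2| = 2 - u := by rw [abs_of_nonpos (by linarith)]; ring
    have d1 : (1 : ℝ) + a1 * u > 0 := by nlinarith
    have d2 : (1 : ℝ) + a1 * (1 - u) > 0 := by nlinarith
    unfold S41b
    rw [b1, b2, b3, b4]
    rw [if_neg (by linarith), if_pos (by linarith), if_pos (by linarith),
        if_pos (by linarith), if_neg (by linarith), if_pos (by linarith)]
    have hd1 : (1 : ℝ) + a1 * u ≠ 0 := ne_of_gt d1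
    have hd2 : (-1 : ℝ) + a1 - a1 * (u + 1) ≠ 0 := by intro h; nlinarith
    have hd3 : (1 : ℝ) + a1 * (1 - u) ≠ 0 := ne_of_gt d2
    have hd4 : (-1 : ℝ) + a1 - a1 * (2 - u) ≠ 0 := by intro h; nlinarith
    rw [show (-1 : ℝ) + a1 - a1 * (u + 1) = -(1 + a1 * u) by ring,
      show (-1 : ℝ) + a1 - a1 * (2 - u) = -(1 + a1 * (1 - u)) by ring]
    have hd1' : (1 : ℝ) + u * a1 ≠ 0 := by rw [mul_comm]; exact hd1
    field_simp
    ring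

theorem S41b_partition_of_unity (a1 a2 : ℝ) (ha1 : -1 < a1) (t : ℝ) :
    ∑' i : ℤ, S41b a1 a2 (t - i) = 1 := by
  set n : ℤ := ⌊t⌋ with hn
  obtain ⟨u, h0, h1, ht⟩ : ∃ u : ℝ, 0 ≤ u ∧ u < 1 ∧ t = (n : ℝ) + u :=
    ⟨Int.fract t, Int.fract_nonneg t, Int.fract_lt_one t, by rw [hn, Int.fract]; ring⟩
  rw [tsum_eq_sum (s := ({n-1, n, n+1, n+2} : Finset ℤ))]
  · have e1 : t - ((n-1 : ℤ) : ℝ) = u + 1 := by push_cast; rw [ht]; ring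
    have e2 : t - ((n : ℤ) : ℝ) = u := by rw [ht]; ring
    have e3 : t - ((n+1 : ℤ) : ℝ) = u - 1 := by push_cast; rw [ht]; ring
    have e4 : t - ((n+2 : ℤ) : ℝ) = u - 2 := by push_cast; rw [ht]; ring
    rw [Finset.sum_insert (by simp only [Finset.mem_insert, Finset.mem_singleton]; omega),
      Finset.sum_insert (by simp only [Finset.mem_insert, Finset.mem_singleton]; omega),
      Finset.sum_insert (by simp only [Finset.mem_singleton]; omega),
      Finset.sum_singleton, e1, e2, e3, e4]
    linarith [S41b_cell_sum a1 a2 ha1 u h0 h1]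
  · intro i hi
    apply S41b_zero
    simp only [Finset.mem_insert, Finset.mem_singleton] at hi
    have hi' : i ≤ n - 2 ∨ n + 3 ≤ i := by omega
    rcases hi' with h | h
    · have hc : ((i:ℝ)) ≤ (n:ℝ) - 2 := by
        have : (i:ℝ) ≤ ((n:ℤ):ℝ) - 2 := by exact_mod_cast h
        linarith
      rw [abs_of_nonneg (by rw [ht]; linarith), ht]; linarith
    · have hc : (n:ℝ) + 3 ≤ (i:ℝ) := by exact_mod_cast h
      rw [abs_of_nonpos (by rw [ht]; linarith), ht]; linarith
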